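/- arXiv:1210.5526 — 3 statements merged into one kernel-verified Lean document; each statement's English description precedes it below -/
import Mathlib

section
/- The function A ↦ (det A / tr A)^{1/(n-1)} is concave on the cone of n×n positive definite Hermitian matrices. -/
/-!
Diagonalize `C = t A + (1 - t) B` by a unitary `U`. In that basis the diagonals `a, b` of `A, B`
satisfy `t a + (1 - t) b = spec C`, and Hadamard's inequality `det A ≤ ∏ aᵢ` (with `tr A = ∑ aᵢ`)
reduces the claim to concavity of `f x = (∏ xᵢ / ∑ xᵢ) ^ (1 / (n - 1))` on the positive orthant.
That concavity follows from the tangent bound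
`f x ≤ f c · (∑ xᵢ / cᵢ - ∑ xᵢ / ∑ cᵢ) / (n - 1)`, linear in `x` with equality at `x = c`.
With `rᵢ = xᵢ / cᵢ` and `T = ∑ xᵢ / ∑ cᵢ`, a weighted mean of the `rᵢ`, the tangent bound says
`∏ rᵢ ≤ T · ((∑ rᵢ - T) / (n - 1)) ^ (n - 1)`: replace a smallest and a largest `rᵢ` by `T` and
their sum minus `T`, which does not decrease the product, then apply AM-GM to the other `n - 1`.
-/

open Finset Matrix
open scoped ComplexOrder

theorem Real.prod_le_sum_div_card_pow {ι : Type*} (s : Finset ι) {f : ι → ℝ}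
    (hf : ∀ i ∈ s, 0 ≤ f i) : ∏ i ∈ s, f i ≤ ((∑ i ∈ s, f i) / #s) ^ #s := by
  rcases s.eq_empty_or_nonempty with rfl | hs
  · simp
  have hcard : (#s : ℝ) ≠ 0 := by positivity
  have hamgm := Real.geom_mean_le_arith_mean_weighted s (fun _ ↦ (#s : ℝ)⁻¹) f
    (fun _ _ ↦ by positivity) (by simp [hcard]) hf
  rw [← mul_sum, ← div_eq_inv_mul] at hamgm
  calc ∏ i ∈ s, f i = ∏ i ∈ s, (f i ^ (#s : ℝ)⁻¹) ^ #s :=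
        prod_congr rfl fun i hi ↦ (Real.rpow_inv_natCast_pow (hf i hi) hs.card_ne_zero).symm
    _ = (∏ i ∈ s, f i ^ (#s : ℝ)⁻¹) ^ #s := prod_pow _ _ _
    _ ≤ _ := pow_le_pow_left₀ (prod_nonneg fun i hi ↦ by have := hf i hi; positivity) hamgm _

section PositiveOrthant

variable {ι : Type*} [Fintype ι]

theorem prod_le_mul_sum_sub_div_pow {r : ι → ℝ} (hr : ∀ i, 0 ≤ r i) {j k : ι} {T : ℝ}
    (hj : r j ≤ T) (hk : T ≤ r k) :
    ∏ i, r i ≤ T * ((∑ i, r i - T) / (Fintype.card ι - 1 : ℕ)) ^ (Fintype.card ι - 1) := by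
  classical
  have hcard : #(univ.erase j) = Fintype.card ι - 1 := by simp [card_erase_of_mem]
  rcases eq_or_ne j k with rfl | hjk
  · obtain rfl : T = r j := le_antisymm hk hj
    have hamgm := Real.prod_le_sum_div_card_pow (univ.erase j) fun i _ ↦ hr i
    rw [hcard, sum_erase_eq_sub (mem_univ j)] at hamgm
    rw [← mul_prod_erase univ r (mem_univ j)]
    exact mul_le_mul_of_nonneg_left hamgm (hr j)
  have hk' : k ∈ univ.erase j := mem_erase.mpr ⟨hjk.symm, mem_univ k⟩
  set f := Function.update r k (r j + r k - T)
  set P := ∏ i ∈ univ.erase j \ {k}, r i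
  have hprod : ∏ i, r i = r j * r k * P := by
    rw [← mul_prod_erase univ r (mem_univ j), prod_eq_mul_prod_sdiff_singleton_of_mem hk',
      mul_assoc]
  have hprod_f : ∏ i ∈ univ.erase j, f i = (r j + r k - T) * P := prod_update_of_mem hk' _ _
  have hsum_f : ∑ i ∈ univ.erase j, f i = ∑ i, r i - T := by
    rw [sum_update_of_mem hk', ← add_sum_erase univ r (mem_univ j),
      sum_eq_add_sum_sdiff_singleton_of_mem hk']
    ring
  have hf : ∀ i ∈ univ.erase j, 0 ≤ f i := fun i _ ↦ by
    rcases eq_or_ne i k with rfl | hik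
    · simp only [f, Function.update_self]; linarith [hr j]
    · simp [f, hik, hr]
  have hamgm := Real.prod_le_sum_div_card_pow (univ.erase j) hf
  rw [hcard, hsum_f, hprod_f] at hamgm
  have hP : 0 ≤ P := prod_nonneg fun i _ ↦ hr i
  calc ∏ i, r i = r j * r k * P := hprod
    _ ≤ T * (r j + r k - T) * P := mul_le_mul_of_nonneg_right (by nlinarith) hP
    _ ≤ _ := by rw [mul_assoc]; exact mul_le_mul_of_nonneg_left hamgm ((hr j).trans hj)

variable (ι) in
noncomputable def prodDivSumRoot (x : ι → ℝ) : ℝ :=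
  ((∏ i, x i) / ∑ i, x i) ^ ((1 : ℝ) / (Fintype.card ι - 1))

theorem prodDivSumRoot_le (hι : 2 ≤ Fintype.card ι) {x c : ι → ℝ} (hx : ∀ i, 0 < x i)
    (hc : ∀ i, 0 < c i) :
    prodDivSumRoot ι x ≤
      prodDivSumRoot ι c * (∑ i, x i / c i - (∑ i, x i) / ∑ i, c i) / (Fintype.card ι - 1) := by
  have : Nonempty ι := Fintype.card_pos_iff.mp (by omega)
  set m := Fintype.card ι - 1
  have hm : (m : ℝ) = Fintype.card ι - 1 := Nat.cast_pred (by omega)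
  have hexp : (1 : ℝ) / (Fintype.card ι - 1) = (m : ℝ)⁻¹ := by rw [hm, one_div]
  set r : ι → ℝ := fun i ↦ x i / c i
  set T := (∑ i, x i) / ∑ i, c i
  have hr : ∀ i, 0 < r i := fun i ↦ div_pos (hx i) (hc i)
  have hSc : 0 < ∑ i, c i := sum_pos (fun i _ ↦ hc i) univ_nonempty
  have hT : 0 < T := div_pos (sum_pos (fun i _ ↦ hx i) univ_nonempty) hSc
  have hx_eq : ∀ i, x i = r i * c i := fun i ↦ (div_mul_cancel₀ _ (hc i).ne').symm
  obtain ⟨j, -, hj⟩ := exists_min_image univ r univ_nonempty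
  obtain ⟨k, -, hk⟩ := exists_max_image univ r univ_nonempty
  have hjT : r j ≤ T := by
    rw [le_div_iff₀ hSc, mul_sum]
    exact sum_le_sum fun i _ ↦ (hx_eq i).symm ▸
      mul_le_mul_of_nonneg_right (hj i (mem_univ i)) (hc i).le
  have hTk : T ≤ r k := by
    rw [div_le_iff₀ hSc, mul_sum]
    exact sum_le_sum fun i _ ↦ (hx_eq i).symm ▸
      mul_le_mul_of_nonneg_right (hk i (mem_univ i)) (hc i).le
  set G := (∑ i, r i - T) / m
  have hG : 0 ≤ G := div_nonneg
    (sub_nonneg.mpr (hTk.trans (single_le_sum (fun i _ ↦ (hr i).le) (mem_univ k)))) m.cast_nonneg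
  have hsmooth : (∏ i, r i) / T ≤ G ^ m := by
    rw [div_le_iff₀' hT]
    exact prod_le_mul_sum_sub_div_pow (fun i ↦ (hr i).le) hjT hTk
  have hsplit : (∏ i, x i) / ∑ i, x i = (∏ i, c i) / (∑ i, c i) * ((∏ i, r i) / T) := by
    have hSx : ∑ i, x i = T * ∑ i, c i := (div_mul_cancel₀ _ hSc.ne').symm
    rw [hSx, prod_congr rfl fun i _ ↦ hx_eq i, prod_mul_distrib]
    field_simp
  have hPc : 0 ≤ (∏ i, c i) / ∑ i, c i := div_nonneg (prod_nonneg fun i _ ↦ (hc i).le) hSc.le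
  have hPr : 0 ≤ (∏ i, r i) / T := div_nonneg (prod_nonneg fun i _ ↦ (hr i).le) hT.le
  unfold prodDivSumRoot
  rw [hexp, ← hm, hsplit, Real.mul_rpow hPc hPr, mul_div_assoc]
  gcongr
  calc ((∏ i, r i) / T) ^ (m : ℝ)⁻¹ ≤ (G ^ m) ^ (m : ℝ)⁻¹ := by gcongr
    _ = G := Real.pow_rpow_inv_natCast hG (by omega)

theorem concaveOn_prodDivSumRoot (hι : 2 ≤ Fintype.card ι) :
    ConcaveOn ℝ (Set.univ.pi fun _ ↦ Set.Ioi 0) (prodDivSumRoot ι) := by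
  have hconv : Convex ℝ (Set.univ.pi fun _ : ι ↦ Set.Ioi (0 : ℝ)) :=
    convex_pi fun _ _ ↦ convex_Ioi 0
  refine ⟨hconv, fun x hx y hy a b ha hb hab ↦ ?_⟩
  set c := a • x + b • y
  have hc : ∀ i, 0 < c i := fun i ↦ hconv hx hy ha hb hab i (Set.mem_univ i)
  have hx : ∀ i, 0 < x i := fun i ↦ hx i (Set.mem_univ i)
  have hy : ∀ i, 0 < y i := fun i ↦ hy i (Set.mem_univ i)
  have hn : (0 : ℝ) < Fintype.card ι - 1 := by
    have : (2 : ℝ) ≤ Fintype.card ι := by exact_mod_cast hι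
    linarith
  have : Nonempty ι := Fintype.card_pos_iff.mp (by omega)
  have hSc : 0 < ∑ i, c i := sum_pos (fun i _ ↦ hc i) univ_nonempty
  have hlin : a * (∑ i, x i / c i - (∑ i, x i) / ∑ i, c i)
      + b * (∑ i, y i / c i - (∑ i, y i) / ∑ i, c i) = Fintype.card ι - 1 := by
    have hsum : ∑ i, c i = a * ∑ i, x i + b * ∑ i, y i := by
      simp [c, sum_add_distrib, mul_sum]
    have hratio : ∀ i, a * (x i / c i) + b * (y i / c i) = 1 := fun i ↦ by
      have hci : c i = a * x i + b * y i := rfl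
      field_simp [(hc i).ne']
      exact hci.symm
    have hmean : a * ((∑ i, x i) / ∑ i, c i) + b * ((∑ i, y i) / ∑ i, c i) = 1 := by
      field_simp
      exact hsum.symm
    have hcard : ∑ i, a * (x i / c i) + ∑ i, b * (y i / c i) = Fintype.card ι := by
      simp [← sum_add_distrib, hratio]
    rw [mul_sub, mul_sub, mul_sum, mul_sum]
    linarith
  simp only [smul_eq_mul]
  calc a * prodDivSumRoot ι x + b * prodDivSumRoot ι y
      ≤ a * (prodDivSumRoot ι c * (∑ i, x i / c i - (∑ i, x i) / ∑ i, c i)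
            / (Fintype.card ι - 1))
        + b * (prodDivSumRoot ι c * (∑ i, y i / c i - (∑ i, y i) / ∑ i, c i)
            / (Fintype.card ι - 1)) := by
        gcongr
        exacts [prodDivSumRoot_le hι hx hc, prodDivSumRoot_le hι hy hc]
    _ = prodDivSumRoot ι c * (a * (∑ i, x i / c i - (∑ i, x i) / ∑ i, c i)
          + b * (∑ i, y i / c i - (∑ i, y i) / ∑ i, c i)) / (Fintype.card ι - 1) := by ring
    _ = prodDivSumRoot ι c := by rw [hlin, mul_div_assoc, div_self hn.ne', mul_one]

end PositiveOrthant

namespace Matrix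

variable {ι 𝕜 : Type*} [Fintype ι] [DecidableEq ι] [RCLike 𝕜]

theorem PosSemidef.re_det_le_re_trace_div_card_pow {A : Matrix ι ι 𝕜} (hA : A.PosSemidef) :
    RCLike.re A.det ≤ (RCLike.re A.trace / Fintype.card ι) ^ Fintype.card ι := by
  rw [hA.1.det_eq_prod_eigenvalues, hA.1.trace_eq_sum_eigenvalues, ← RCLike.ofReal_prod,
    ← RCLike.ofReal_sum, RCLike.ofReal_re, RCLike.ofReal_re]
  exact Real.prod_le_sum_div_card_pow univ fun i _ ↦ hA.eigenvalues_nonneg i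

theorem PosDef.re_det_le_prod_re_diag {A : Matrix ι ι 𝕜} (hA : A.PosDef) :
    RCLike.re A.det ≤ ∏ i, RCLike.re (A i i) := by
  set a : ι → ℝ := fun i ↦ RCLike.re (A i i)
  have ha : ∀ i, 0 < a i := fun i ↦ (RCLike.pos_iff.mp hA.diag_pos).1
  have hA_diag : ∀ i, A i i = a i := fun i ↦ (hA.1.coe_re_apply_self i).symm
  -- rescale `A` to unit diagonal, whose determinant is at most 1 by AM-GM on the eigenvalues
  set w : ι → ℝ := fun i ↦ (√(a i))⁻¹
  have hw : ∀ i, w i ^ 2 = (a i)⁻¹ := fun i ↦ by simp [w, Real.sq_sqrt (ha i).le]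
  set D : Matrix ι ι 𝕜 := diagonal fun i ↦ (w i : 𝕜)
  have hN : (D * A * D).PosSemidef := by
    have hD : Dᴴ = D := by simp [D, diagonal_conjTranspose, Pi.star_def, RCLike.star_def]
    simpa [hD] using hA.posSemidef.conjTranspose_mul_mul_same D
  have hN_diag : ∀ i, (D * A * D) i i = 1 := fun i ↦ by
    simp only [D, diagonal_mul, mul_diagonal, hA_diag]
    rw [mul_right_comm, ← sq]
    exact_mod_cast (hw i).symm ▸ inv_mul_cancel₀ (ha i).ne'
  have hN_trace : RCLike.re (D * A * D).trace = Fintype.card ι := by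
    simp [trace, hN_diag]
  have hN_det : RCLike.re (D * A * D).det = (∏ i, a i)⁻¹ * RCLike.re A.det := by
    rw [det_mul, det_mul, det_diagonal, mul_right_comm, ← sq, ← prod_pow, ← prod_inv_distrib]
    simp_rw [← hw]
    norm_cast
    exact RCLike.re_ofReal_mul _ _
  have hone : ((Fintype.card ι : ℝ) / Fintype.card ι) ^ Fintype.card ι = 1 := by
    rcases eq_or_ne (Fintype.card ι) 0 with h | h <;> simp [h]
  have := hN.re_det_le_re_trace_div_card_pow
  rwa [hN_trace, hN_det, hone, inv_mul_le_iff₀ (prod_pos fun i _ ↦ ha i), mul_one] at this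

theorem PosDef.star_mul_mul {A : Matrix ι ι 𝕜} (hA : A.PosDef) {U : Matrix ι ι 𝕜}
    (hU : U ∈ unitaryGroup ι 𝕜) : (star U * A * U).PosDef :=
  (Unitary.isUnit_coe (U := ⟨U, hU⟩)).posDef_star_left_conjugate_iff.mpr hA

theorem PosDef.rpow_re_det_div_re_trace_le [Nonempty ι] {A : Matrix ι ι 𝕜} (hA : A.PosDef)
    {U : Matrix ι ι 𝕜} (hU : U ∈ unitaryGroup ι 𝕜) :
    (RCLike.re A.det / RCLike.re A.trace) ^ ((1 : ℝ) / (Fintype.card ι - 1)) ≤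
      prodDivSumRoot ι fun i ↦ RCLike.re ((star U * A * U) i i) := by
  have hdet : RCLike.re A.det ≤ ∏ i, RCLike.re ((star U * A * U) i i) := by
    rw [← det_conj_of_mul_eq_one (mem_unitaryGroup_iff'.mp hU) (mem_unitaryGroup_iff.mp hU)]
    exact (hA.star_mul_mul hU).re_det_le_prod_re_diag
  have htrace : RCLike.re A.trace = ∑ i, RCLike.re ((star U * A * U) i i) := by
    rw [← map_sum]
    change _ = RCLike.re (star U * A * U).trace
    rw [trace_mul_cycle, mem_unitaryGroup_iff.mp hU, one_mul]
  have hexp : (0 : ℝ) ≤ 1 / (Fintype.card ι - 1) := by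
    have : (1 : ℝ) ≤ Fintype.card ι := by exact_mod_cast Fintype.card_pos
    exact div_nonneg zero_le_one (by linarith)
  have hdet_pos := (RCLike.pos_iff.mp hA.det_pos).1
  have htrace_pos := (RCLike.pos_iff.mp hA.trace_pos).1
  rw [htrace] at htrace_pos ⊢
  unfold prodDivSumRoot
  gcongr

theorem IsHermitian.prodDivSumRoot_eigenvalues {A : Matrix ι ι 𝕜} (hA : A.IsHermitian) :
    prodDivSumRoot ι hA.eigenvalues =
      (RCLike.re A.det / RCLike.re A.trace) ^ ((1 : ℝ) / (Fintype.card ι - 1)) := by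
  rw [prodDivSumRoot, hA.det_eq_prod_eigenvalues, hA.trace_eq_sum_eigenvalues,
    ← RCLike.ofReal_prod, ← RCLike.ofReal_sum, RCLike.ofReal_re, RCLike.ofReal_re]

theorem IsHermitian.re_star_eigenvectorUnitary_mul_mul_apply_self {A : Matrix ι ι 𝕜}
    (hA : A.IsHermitian) (i : ι) :
    RCLike.re ((star (hA.eigenvectorUnitary : Matrix ι ι 𝕜) * A * hA.eigenvectorUnitary) i i) =
      hA.eigenvalues i := by
  rw [← Unitary.conjStarAlgAut_star_apply (S := 𝕜), hA.conjStarAlgAut_star_eigenvectorUnitary]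
  simp

end Matrix

/-- The function `A ↦ (det A / tr A)^(1/(n-1))` is concave on the cone of
`n × n` positive definite Hermitian matrices. -/
theorem det_div_trace_rpow_concave (n : ℕ) (hn : 2 ≤ n)
    (A B : Matrix (Fin n) (Fin n) ℂ) (hA : A.PosDef) (hB : B.PosDef)
    (t : ℝ) (ht0 : 0 ≤ t) (ht1 : t ≤ 1) :
    t * (A.det.re / A.trace.re) ^ ((1 : ℝ) / ((n : ℝ) - 1))
      + (1 - t) * (B.det.re / B.trace.re) ^ ((1 : ℝ) / ((n : ℝ) - 1))
    ≤ (((t : ℂ) • A + ((1 - t : ℝ) : ℂ) • B).det.re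
        / ((t : ℂ) • A + ((1 - t : ℝ) : ℂ) • B).trace.re)
        ^ ((1 : ℝ) / ((n : ℝ) - 1)) := by
  have : Nonempty (Fin n) := ⟨⟨0, by omega⟩⟩
  have ht1' : 0 ≤ 1 - t := sub_nonneg.mpr ht1
  set C := (t : ℂ) • A + ((1 - t : ℝ) : ℂ) • B
  have hC : C.IsHermitian :=
    ((hA.posSemidef.smul (Complex.zero_le_real.mpr ht0)).add
      (hB.posSemidef.smul (Complex.zero_le_real.mpr ht1'))).1
  set U : Matrix (Fin n) (Fin n) ℂ := ↑hC.eigenvectorUnitary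
  have hU : U ∈ unitaryGroup (Fin n) ℂ := hC.eigenvectorUnitary.2
  set diagU : Matrix (Fin n) (Fin n) ℂ → Fin n → ℝ := fun X i ↦ ((star U * X * U) i i).re
  have hdiag_C : diagU C = t • diagU A + (1 - t) • diagU B := by
    ext i
    simp [diagU, C, Matrix.mul_add, Matrix.add_mul]
  have heig : diagU C = hC.eigenvalues := funext hC.re_star_eigenvectorUnitary_mul_mul_apply_self
  have hdiag_pos {X : Matrix (Fin n) (Fin n) ℂ} (hX : X.PosDef) :
      diagU X ∈ Set.univ.pi fun _ ↦ Set.Ioi 0 := fun i _ ↦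
    (Complex.pos_iff.mp (hX.star_mul_mul hU).diag_pos).1
  have hconcave := (concaveOn_prodDivSumRoot (by simpa using hn)).2
    (hdiag_pos hA) (hdiag_pos hB) ht0 ht1' (by ring)
  rw [← hdiag_C, heig, hC.prodDivSumRoot_eigenvalues] at hconcave
  have hA' := hA.rpow_re_det_div_re_trace_le hU
  have hB' := hB.rpow_re_det_div_re_trace_le hU
  simp only [Fintype.card_fin, RCLike.re_to_complex, smul_eq_mul] at hconcave hA' hB'
  calc _ ≤ t * prodDivSumRoot (Fin n) (diagU A) + (1 - t) * prodDivSumRoot (Fin n) (diagU B) := by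
        gcongr
    _ ≤ _ := hconcave
end

section
/- The function A ↦ log det A − log tr A is concave on the cone of n×n positive definite Hermitian matrices. -/
/-!
At a positive definite `C`, the function `f M = log det M - log tr M` has the supergradient
`C⁻¹ - 1 / tr C`, that is `f M ≤ f C + re tr (C⁻¹ M) - n - (tr M / tr C - 1)`; averaging this
inequality over `M = A, B` at `C = t A + (1 - t) B` gives concavity. Conjugating by a unitary
that diagonalises `C` reduces the supergradient inequality to diagonal `C`. There Hadamard's
inequality bounds `log det M` by the logarithms of the diagonal entries, and what remains is the
supergradient inequality of `x ↦ ∑ log xᵢ - log ∑ xᵢ` on the positive orthant, which comes from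
Jensen's inequality for `log`.
-/

open scoped ComplexOrder

open Real

namespace Real

variable {ι : Type*} [Fintype ι]

theorem sub_one_sub_log_sum_mul_le {w m : ι → ℝ} (hw : ∀ i, 0 ≤ w i) (hw1 : ∑ i, w i = 1)
    (hm : ∀ i, 0 < m i) :
    (∑ i, w i * m i) - 1 - log (∑ i, w i * m i) ≤ ∑ i, (m i - 1 - log (m i)) := by
  have jensen : ∑ i, w i * log (m i) ≤ log (∑ i, w i * m i) :=
    strictConcaveOn_log_Ioi.concaveOn.le_map_sum (fun i _ => hw i) hw1 fun i _ => hm i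
  have weight_le_one : ∀ i, w i ≤ 1 := fun i =>
    hw1 ▸ Finset.single_le_sum (fun j _ => hw j) (Finset.mem_univ i)
  have averaged : ∑ i, w i * (m i - 1 - log (m i)) ≤ ∑ i, (m i - 1 - log (m i)) :=
    Finset.sum_le_sum fun i _ => mul_le_of_le_one_left
      (by linarith [log_le_sub_one_of_pos (hm i)]) (weight_le_one i)
  have expand : ∑ i, w i * (m i - 1 - log (m i))
      = ∑ i, w i * m i - 1 - ∑ i, w i * log (m i) := by
    simp only [mul_sub, mul_one, Finset.sum_sub_distrib, hw1]
  linarith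

theorem sum_log_sub_log_sum_le [Nonempty ι] {a d : ι → ℝ} (ha : ∀ i, 0 < a i)
    (hd : ∀ i, 0 < d i) :
    ∑ i, log (a i) - log (∑ i, a i) ≤ ∑ i, log (d i) - log (∑ i, d i)
      + (∑ i, a i / d i - Fintype.card ι) - ((∑ i, a i) / (∑ i, d i) - 1) := by
  have hS : 0 < ∑ i, d i := Finset.sum_pos (fun i _ => hd i) Finset.univ_nonempty
  have hT : 0 < ∑ i, a i := Finset.sum_pos (fun i _ => ha i) Finset.univ_nonempty
  have key := sub_one_sub_log_sum_mul_le (w := fun i => d i / ∑ j, d j) (m := fun i => a i / d i)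
    (fun i => (div_pos (hd i) hS).le) (by rw [← Finset.sum_div, div_self hS.ne'])
    fun i => div_pos (ha i) (hd i)
  have mean : ∑ i, d i / (∑ j, d j) * (a i / d i) = (∑ i, a i) / ∑ i, d i := by
    rw [Finset.sum_div]
    exact Finset.sum_congr rfl fun i _ => by field_simp [(hd i).ne']
  simp only [mean, Finset.sum_sub_distrib, log_div hT.ne' hS.ne',
    fun i => log_div (ha i).ne' (hd i).ne', Finset.sum_const, Finset.card_univ, nsmul_eq_mul,
    mul_one] at key
  linarith

end Real

namespace Matrix

open RCLike Unitary

variable {𝕜 ι : Type*} [RCLike 𝕜]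

theorem PosDef.re_diag_pos {A : Matrix ι ι 𝕜} (hA : A.PosDef) (i : ι) : 0 < re (A i i) :=
  (pos_iff.mp hA.diag_pos).1

theorem PosDef.smul_add_smul {A B : Matrix ι ι 𝕜} (hA : A.PosDef) (hB : B.PosDef) {s t : ℝ}
    (hs : 0 ≤ s) (ht : 0 ≤ t) (hst : 0 < s + t) : (s • A + t • B).PosDef := by
  rcases hs.eq_or_lt with rfl | hs
  · exact PosDef.posSemidef_add (hA.posSemidef.smul le_rfl) (hB.smul (by linarith))
  · exact (hA.smul hs).add_posSemidef (hB.posSemidef.smul ht)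

variable [Fintype ι] [DecidableEq ι]

noncomputable def logDetSubLogTrace (M : Matrix ι ι 𝕜) : ℝ :=
  log (re M.det) - log (re M.trace)

theorem re_trace_mul_smul_add_smul (X A B : Matrix ι ι 𝕜) (s t : ℝ) :
    re (X * (s • A + t • B)).trace = s * re (X * A).trace + t * re (X * B).trace := by
  simp [mul_add, trace_add, trace_smul, smul_re]

theorem PosDef.log_det_le_trace_sub_card {A : Matrix ι ι 𝕜} (hA : A.PosDef) :
    log (re A.det) ≤ re A.trace - Fintype.card ι := by
  rw [hA.1.det_eq_prod_eigenvalues, hA.1.trace_eq_sum_eigenvalues, ← ofReal_prod, ← ofReal_sum,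
    ofReal_re, ofReal_re, log_prod fun i _ => (hA.eigenvalues_pos i).ne']
  calc ∑ i, log (hA.1.eigenvalues i) ≤ ∑ i, (hA.1.eigenvalues i - 1) :=
        Finset.sum_le_sum fun i _ => log_le_sub_one_of_pos (hA.eigenvalues_pos i)
    _ = ∑ i, hA.1.eigenvalues i - Fintype.card ι := by simp [Finset.sum_sub_distrib]

/-- Hadamard's inequality: rescaling `A` to unit diagonal turns it into
`log det ≤ tr - card ι`. -/
theorem PosDef.log_det_le_sum_log_diag {A : Matrix ι ι 𝕜} (hA : A.PosDef) :
    log (re A.det) ≤ ∑ i, log (re (A i i)) := by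
  set a : ι → ℝ := fun i => re (A i i)
  have ha : ∀ i, 0 < a i := hA.re_diag_pos
  set e : ι → ℝ := fun i => (√(a i))⁻¹
  have he : ∀ i, e i ^ 2 = (a i)⁻¹ := fun i => by simp [e, inv_pow, sq_sqrt (ha i).le]
  set E : Matrix ι ι 𝕜 := diagonal fun i => (e i : 𝕜)
  have hN : (E * A * E).PosDef := by
    have hE : IsUnit E := isUnit_diagonal.mpr <| Pi.isUnit_iff.mpr fun i =>
      isUnit_iff_ne_zero.mpr <| ofReal_ne_zero.mpr (inv_pos.mpr (sqrt_pos.mpr (ha i))).ne'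
    simpa [E, diagonal_conjTranspose, Pi.star_def] using
      hA.conjTranspose_mul_mul_same (mulVec_injective_iff_isUnit.mpr hE)
  have htrace : re (E * A * E).trace = Fintype.card ι := by
    have hdiag : ∀ i, re ((E * A * E) i i) = 1 := fun i => by
      rw [mul_diagonal, diagonal_mul, show (e i : 𝕜) * A i i * e i = ((e i ^ 2 : ℝ) : 𝕜) * A i i by
        push_cast; ring, re_ofReal_mul, he, inv_mul_cancel₀ (ha i).ne']
    simp [trace, map_sum, hdiag]
  have hdet : re (E * A * E).det = (∏ i, a i)⁻¹ * re A.det := by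
    rw [det_mul, det_mul, det_diagonal, ← ofReal_prod, mul_comm, ← mul_assoc, ← ofReal_mul,
      re_ofReal_mul, ← sq, ← Finset.prod_pow, Finset.prod_congr rfl fun i _ => he i,
      Finset.prod_inv_distrib]
  have := hN.log_det_le_trace_sub_card
  rw [htrace, hdet, sub_self, log_mul (inv_pos.mpr (Finset.prod_pos fun i _ => ha i)).ne'
    (pos_iff.mp hA.det_pos).1.ne', log_inv, log_prod fun i _ => (ha i).ne'] at this
  linarith

section UnitaryConj

variable (U : unitary (Matrix ι ι 𝕜)) (X : Matrix ι ι 𝕜)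

theorem det_conjStarAlgAut : (conjStarAlgAut 𝕜 _ U X).det = X.det := by
  rw [conjStarAlgAut_apply, det_mul, det_mul, mul_comm, ← mul_assoc, ← det_mul,
    coe_star_mul_self, det_one, one_mul]

theorem trace_conjStarAlgAut : (conjStarAlgAut 𝕜 _ U X).trace = X.trace := by
  rw [conjStarAlgAut_apply, trace_mul_cycle, coe_star_mul_self, one_mul]

theorem inv_conjStarAlgAut : (conjStarAlgAut 𝕜 _ U X)⁻¹ = conjStarAlgAut 𝕜 _ U X⁻¹ := by
  rw [conjStarAlgAut_apply, conjStarAlgAut_apply, mul_inv_rev, mul_inv_rev,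
    inv_eq_left_inv (star_mul_self_of_mem U.2), inv_eq_left_inv (mul_star_self_of_mem U.2),
    mul_assoc]

theorem logDetSubLogTrace_conjStarAlgAut :
    logDetSubLogTrace (conjStarAlgAut 𝕜 _ U X) = logDetSubLogTrace X := by
  rw [logDetSubLogTrace, logDetSubLogTrace, det_conjStarAlgAut, trace_conjStarAlgAut]

variable {X} in
theorem PosDef.conjStarAlgAut (hX : X.PosDef) : (conjStarAlgAut 𝕜 _ U X).PosDef := by
  have := hX.conjTranspose_mul_mul_same
    (mulVec_injective_iff_isUnit.mpr (isUnit_coe (U := U)).star)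
  rw [conjStarAlgAut_apply]
  rwa [← star_eq_conjTranspose, star_star] at this

end UnitaryConj

theorem PosDef.logDetSubLogTrace_le_of_diagonal [Nonempty ι] {M : Matrix ι ι 𝕜} (hM : M.PosDef)
    {d : ι → ℝ} (hd : ∀ i, 0 < d i) :
    logDetSubLogTrace M ≤ logDetSubLogTrace (diagonal (ofReal ∘ d) : Matrix ι ι 𝕜)
      + (re ((diagonal (ofReal ∘ d))⁻¹ * M).trace - Fintype.card ι)
      - (re M.trace / re (diagonal (ofReal ∘ d) : Matrix ι ι 𝕜).trace - 1) := by
  have hdet : re (diagonal (ofReal ∘ d) : Matrix ι ι 𝕜).det = ∏ i, d i := by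
    simp only [det_diagonal, Function.comp_apply, ← ofReal_prod, ofReal_re]
  have htrD : re (diagonal (ofReal ∘ d) : Matrix ι ι 𝕜).trace = ∑ i, d i := by
    simp [trace_diagonal, map_sum]
  have htrM : re M.trace = ∑ i, re (M i i) := by simp [trace, map_sum]
  have hgrad : re ((diagonal (ofReal ∘ d))⁻¹ * M).trace = ∑ i, re (M i i) / d i := by
    have hinv : (diagonal (ofReal ∘ d) : Matrix ι ι 𝕜)⁻¹ = diagonal fun i => (((d i)⁻¹ : ℝ) : 𝕜) :=
      inv_eq_left_inv <| by
        rw [diagonal_mul_diagonal, ← diagonal_one]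
        exact congrArg diagonal <| funext fun i => by simp [(hd i).ne']
    simp only [hinv, trace, diag_apply, diagonal_mul, map_sum, re_ofReal_mul, div_eq_inv_mul]
  have := sum_log_sub_log_sum_le hM.re_diag_pos hd
  rw [logDetSubLogTrace, logDetSubLogTrace, hdet, htrD, htrM, hgrad,
    log_prod fun i _ => (hd i).ne']
  linarith [hM.log_det_le_sum_log_diag]

theorem PosDef.logDetSubLogTrace_le [Nonempty ι] {C M : Matrix ι ι 𝕜} (hC : C.PosDef)
    (hM : M.PosDef) :
    logDetSubLogTrace M ≤ logDetSubLogTrace C + (re (C⁻¹ * M).trace - Fintype.card ι)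
      - (re M.trace / re C.trace - 1) := by
  have hD := hC.1.conjStarAlgAut_star_eigenvectorUnitary
  have := (hM.conjStarAlgAut (star hC.1.eigenvectorUnitary)).logDetSubLogTrace_le_of_diagonal
    hC.eigenvalues_pos
  simpa only [← hD, inv_conjStarAlgAut, ← map_mul, trace_conjStarAlgAut,
    logDetSubLogTrace_conjStarAlgAut] using this

end Matrix

open Matrix

/-- The function `A ↦ log (det A) - log (tr A)` is concave on the cone of
`n × n` positive definite Hermitian matrices. -/
theorem log_det_sub_log_trace_concave (n : ℕ) (hn : 2 ≤ n)
    (A B : Matrix (Fin n) (Fin n) ℂ) (hA : A.PosDef) (hB : B.PosDef)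
    (t : ℝ) (ht0 : 0 ≤ t) (ht1 : t ≤ 1) :
    t * (Real.log A.det.re - Real.log A.trace.re)
      + (1 - t) * (Real.log B.det.re - Real.log B.trace.re)
    ≤ Real.log ((t : ℂ) • A + ((1 - t : ℝ) : ℂ) • B).det.re
      - Real.log ((t : ℂ) • A + ((1 - t : ℝ) : ℂ) • B).trace.re := by
  have : Nonempty (Fin n) := ⟨⟨0, by omega⟩⟩
  set C := (t : ℂ) • A + ((1 - t : ℝ) : ℂ) • B
  have hC_eq : C = t • A + (1 - t) • B := by simp only [C, Complex.coe_smul]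
  have hC : C.PosDef := hC_eq ▸ hA.smul_add_smul hB ht0 (by linarith) (by linarith)
  have hgrad : t * (C⁻¹ * A).trace.re + (1 - t) * (C⁻¹ * B).trace.re = n := by
    have := re_trace_mul_smul_add_smul C⁻¹ A B t (1 - t)
    rw [← hC_eq, nonsing_inv_mul _ ((isUnit_iff_isUnit_det C).mp hC.isUnit)] at this
    simpa using this.symm
  have htrace : t * A.trace.re + (1 - t) * B.trace.re = C.trace.re := by
    simp [hC_eq]
  have hpos : 0 < C.trace.re := (RCLike.pos_iff.mp hC.trace_pos).1
  have tangentA := hC.logDetSubLogTrace_le hA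
  have tangentB := hC.logDetSubLogTrace_le hB
  simp only [logDetSubLogTrace, RCLike.re_to_complex, Fintype.card_fin] at tangentA tangentB
  have hratio : t * (A.trace.re / C.trace.re) + (1 - t) * (B.trace.re / C.trace.re) = 1 := by
    rw [← mul_div_assoc, ← mul_div_assoc, ← add_div, htrace, div_self hpos.ne']
  linarith [mul_le_mul_of_nonneg_left tangentA ht0,
    mul_le_mul_of_nonneg_left tangentB (sub_nonneg.mpr ht1)]
end

section
/- Strict concavity lemma (scalar eigenvalue form): Let n ≥ 2, ε > 0, Ψ > 0. There exist θ > 0 and N > 0, depending only on n, ε, Ψ, with the following property. Let λ_1, …, λ_n > 0 with W := ∑λ_i ≥ N and n∏λ_i = ψW for some 0 < ψ ≤ Ψ, and let μ_1, …, μ_n be reals with ε ≤ μ_i ≤ ε^{-1}. Set F^{ii} = 1/λ_i − 1/W. If moreover the subsolution condition ∏μ_i ≥ (ψ/n)∑μ_i holds, then ∑_i F^{ii}(μ_i − λ_i) ≥ θ(1 + ∑_i F^{ii}). -/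
/-!
Write `W = ∑ λᵢ` and `Fⁱⁱ = 1/λᵢ - 1/W`; then `Fⁱⁱ ≥ 0` and `∑ Fⁱⁱ λᵢ = n - 1`.
If `∑ 1/λᵢ ≥ 2n/ε`, the term `∑ Fⁱⁱ μᵢ ≥ ε ∑ Fⁱⁱ` alone dominates `θ (1 + ∑ Fⁱⁱ) + n - 1`.
Otherwise every `λᵢ ≥ ε/(2n)`, so `λᵢ λⱼ (ε/2n)ⁿ⁻² ≤ ∏ λ = ψ W / n` for `i ≠ j`, and for `W`
large the largest eigenvalue `λₘ` carries all of `W` but a bounded amount. The subsolution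
condition then gives `∏_{i ≠ m} μᵢ/λᵢ ≥ (∑ μ / μₘ)(λₘ / W) ≥ 1 + (n-1)ε²/2`, and `x ≤ e^{x-1}`
turns this into `∑ μᵢ/λᵢ ≥ n - 1 + log (1 + (n-1)ε²/2)`: a fixed gain over `∑ Fⁱⁱ λᵢ`.
-/

open Finset Real

theorem log_prod_le_sum_sub_card {α : Type*} {s : Finset α} {x : α → ℝ}
    (hx : ∀ i ∈ s, 0 < x i) : log (∏ i ∈ s, x i) ≤ ∑ i ∈ s, x i - s.card := by
  rw [log_prod fun i hi => (hx i hi).ne']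
  calc ∑ i ∈ s, log (x i) ≤ ∑ i ∈ s, (x i - 1) :=
        sum_le_sum fun i hi => log_le_sub_one_of_pos (hx i hi)
    _ = ∑ i ∈ s, x i - s.card := by simp [sum_sub_distrib]

section

variable {ι : Type*} [Fintype ι]

-- The paper's `Fⁱⁱ`.
noncomputable def linCoeff (lam : ι → ℝ) (i : ι) : ℝ := 1 / lam i - 1 / ∑ j, lam j

theorem linCoeff_nonneg {lam : ι → ℝ} (hlam : ∀ i, 0 < lam i) (i : ι) : 0 ≤ linCoeff lam i :=
  sub_nonneg.2 <| one_div_le_one_div_of_le (hlam i) <|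
    single_le_sum (fun j _ => (hlam j).le) (mem_univ i)

theorem sum_linCoeff_mul (lam x : ι → ℝ) :
    ∑ i, linCoeff lam i * x i = ∑ i, x i / lam i - (∑ i, x i) / ∑ i, lam i := by
  simp only [linCoeff, sub_mul, sum_sub_distrib, one_div_mul_eq_div, ← sum_div]

theorem sum_linCoeff_mul_self [Nonempty ι] {lam : ι → ℝ} (hlam : ∀ i, 0 < lam i) :
    ∑ i, linCoeff lam i * lam i = Fintype.card ι - 1 := by
  have hW : ∑ i, lam i ≠ 0 := (sum_pos (fun i _ => hlam i) univ_nonempty).ne'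
  rw [sum_linCoeff_mul, div_self hW]
  simp [div_self (hlam _).ne']

theorem mul_mul_pow_le_prod {x : ι → ℝ} {a : ℝ} (ha : 0 ≤ a) (hx : ∀ k, a ≤ x k) {i j : ι}
    (hij : i ≠ j) : x i * x j * a ^ (Fintype.card ι - 2) ≤ ∏ k, x k := by
  classical
  have hj : j ∈ univ.erase i := mem_erase.2 ⟨hij.symm, mem_univ j⟩
  have hcard : ((univ.erase i).erase j).card = Fintype.card ι - 2 := by
    rw [card_erase_of_mem hj, card_erase_of_mem (mem_univ i), card_univ]; rfl
  have hx0 : ∀ k, 0 ≤ x k := fun k => ha.trans (hx k)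
  rw [← mul_prod_erase univ x (mem_univ i), ← mul_prod_erase _ x hj, ← mul_assoc, ← hcard,
    ← prod_const]
  exact mul_le_mul_of_nonneg_left (prod_le_prod (fun _ _ => ha) fun k _ => hx k)
    (mul_nonneg (hx0 i) (hx0 j))

theorem sum_sub_max_le {lam : ι → ℝ} {a ψ : ℝ} (ha : 0 < a) (hlam : ∀ k, a ≤ lam k)
    {m : ι} (hm : ∀ k, lam k ≤ lam m)
    (heq : Fintype.card ι * ∏ k, lam k = ψ * ∑ k, lam k) :
    ∑ k, lam k - lam m ≤ (Fintype.card ι - 1) * ψ / a ^ (Fintype.card ι - 2) := by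
  classical
  set n := Fintype.card ι
  set W := ∑ k, lam k
  have hW : 0 < W := sum_pos (fun k _ => ha.trans_le (hlam k)) ⟨m, mem_univ m⟩
  have hsplit : W - lam m = ∑ k ∈ univ.erase m, lam k := by
    rw [sub_eq_iff_eq_add']; exact (add_sum_erase univ lam (mem_univ m)).symm
  have hpair : (W - lam m) * lam m * a ^ (n - 2) ≤ (n - 1) * ∏ k, lam k := by
    calc (W - lam m) * lam m * a ^ (n - 2)
        = ∑ k ∈ univ.erase m, lam k * lam m * a ^ (n - 2) := by rw [hsplit, sum_mul, sum_mul]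
      _ ≤ ∑ k ∈ univ.erase m, ∏ k, lam k :=
          sum_le_sum fun k hk => mul_mul_pow_le_prod ha.le hlam (ne_of_mem_erase hk)
      _ = (n - 1) * ∏ k, lam k := by
          rw [sum_const, card_erase_of_mem (mem_univ _), card_univ, nsmul_eq_mul,
            Nat.cast_pred (Fintype.card_pos_iff.2 ⟨m⟩)]
  have hWm : W ≤ n * lam m := by
    calc W ≤ ∑ _k : ι, lam m := sum_le_sum fun k _ => hm k
      _ = n * lam m := by rw [sum_const, card_univ, nsmul_eq_mul]
  have hrest : 0 ≤ W - lam m := hsplit ▸ sum_nonneg fun k _ => ha.le.trans (hlam k)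
  rw [le_div_iff₀ (pow_pos ha _)]
  refine le_of_mul_le_mul_right ?_ hW
  calc (W - lam m) * a ^ (n - 2) * W ≤ (W - lam m) * a ^ (n - 2) * (n * lam m) := by gcongr
    _ = n * ((W - lam m) * lam m * a ^ (n - 2)) := by ring
    _ ≤ n * ((n - 1) * ∏ k, lam k) := by gcongr
    _ = (n - 1) * ψ * W := by rw [mul_left_comm, heq]; ring

theorem one_add_mul_sq_le_sum_div {μ : ι → ℝ} {ε : ℝ} (hε : 0 < ε) (hμl : ∀ i, ε ≤ μ i)
    (hμu : ∀ i, μ i ≤ ε⁻¹) (m : ι) :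
    1 + (Fintype.card ι - 1) * ε ^ 2 ≤ (∑ i, μ i) / μ m := by
  classical
  have hm : 0 < μ m := hε.trans_le (hμl m)
  have hμ : ∀ i, ε ^ 2 * μ m ≤ μ i := fun i => by
    calc ε ^ 2 * μ m ≤ ε ^ 2 * ε⁻¹ := by gcongr; exact hμu m
      _ = ε := by field_simp
      _ ≤ μ i := hμl i
  rw [le_div_iff₀ hm, ← add_sum_erase univ μ (mem_univ m)]
  calc (1 + (Fintype.card ι - 1) * ε ^ 2) * μ m = μ m + ∑ _i ∈ univ.erase m, ε ^ 2 * μ m := by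
        rw [sum_const, card_erase_of_mem (mem_univ m), card_univ, nsmul_eq_mul,
          Nat.cast_pred (Fintype.card_pos_iff.2 ⟨m⟩)]
        ring
    _ ≤ μ m + ∑ i ∈ univ.erase m, μ i := by gcongr with i; exact hμ i

theorem sum_div_mul_div_le_prod_erase_div [DecidableEq ι] {lam μ : ι → ℝ} {ψ : ℝ}
    (hlam : ∀ i, 0 < lam i) (hμ : ∀ i, 0 < μ i) (heq : Fintype.card ι * ∏ i, lam i = ψ * ∑ i, lam i)
    (hsub : ψ / Fintype.card ι * ∑ i, μ i ≤ ∏ i, μ i) (m : ι) :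
    (∑ i, μ i) / μ m * (lam m / ∑ i, lam i) ≤ ∏ i ∈ univ.erase m, μ i / lam i := by
  have hn : (0 : ℝ) < Fintype.card ι := Nat.cast_pos.2 (Fintype.card_pos_iff.2 ⟨m⟩)
  have hW : 0 < ∑ i, lam i := sum_pos (fun i _ => hlam i) ⟨m, mem_univ m⟩
  have hμm := hμ m
  have hPlam : 0 < ∏ i ∈ univ.erase m, lam i := prod_pos fun i _ => hlam i
  have hlamprod : lam m * ∏ i ∈ univ.erase m, lam i = ψ / Fintype.card ι * ∑ i, lam i := by
    rw [mul_prod_erase univ lam (mem_univ m), div_mul_eq_mul_div, eq_div_iff hn.ne', ← heq]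
    ring
  rw [prod_div_distrib, div_mul_div_comm, div_le_div_iff₀ (by positivity) hPlam]
  calc (∑ i, μ i) * lam m * ∏ i ∈ univ.erase m, lam i
      = ψ / Fintype.card ι * (∑ i, μ i) * ∑ i, lam i := by rw [mul_assoc, hlamprod]; ring
    _ ≤ (∏ i, μ i) * ∑ i, lam i := by gcongr
    _ = (∏ i ∈ univ.erase m, μ i) * (μ m * ∑ i, lam i) := by
        rw [← mul_prod_erase univ μ (mem_univ m)]; ring

end

section

variable {n : ℕ} {lam μ : Fin n → ℝ} {ε θ : ℝ}

theorem concavity_of_le_sum_inv (hn : 0 < n) (hlam : ∀ i, 0 < lam i) (hμ : ∀ i, ε ≤ μ i)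
    (hW : n * ε ≤ ∑ i, lam i) (hA : 2 * n ≤ ε * ∑ i, 1 / lam i) (hθε : θ ≤ ε / 2)
    (hθ : θ ≤ 1 / 2) :
    θ * (1 + ∑ i, linCoeff lam i) ≤ ∑ i, linCoeff lam i * (μ i - lam i) := by
  have : Nonempty (Fin n) := ⟨⟨0, hn⟩⟩
  have hW0 : 0 < ∑ i, lam i := sum_pos (fun i _ => hlam i) univ_nonempty
  have hF : 0 ≤ ∑ i, linCoeff lam i := sum_nonneg fun i _ => linCoeff_nonneg hlam i
  have hFμ : ε * ∑ i, linCoeff lam i ≤ ∑ i, linCoeff lam i * μ i := by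
    rw [mul_sum]
    exact sum_le_sum fun i _ => by
      rw [mul_comm]; exact mul_le_mul_of_nonneg_left (hμ i) (linCoeff_nonneg hlam i)
  have hFsum : ∑ i, linCoeff lam i = ∑ i, 1 / lam i - n / ∑ i, lam i := by
    simpa using sum_linCoeff_mul lam 1
  have hεW : ε * (n / ∑ i, lam i) ≤ 1 := by
    rw [mul_div_assoc', div_le_one hW0]; linarith
  have hθF : θ * ∑ i, linCoeff lam i ≤ ε / 2 * ∑ i, linCoeff lam i := by gcongr
  have hεF : ε * ∑ i, linCoeff lam i = ε * ∑ i, 1 / lam i - ε * (n / ∑ i, lam i) := by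
    rw [hFsum, mul_sub]
  simp only [mul_sub, sum_sub_distrib, sum_linCoeff_mul_self hlam, Fintype.card_fin]
  linarith

theorem concavity_of_le_sum_div {δ : ℝ} (hn : 0 < n) (hε : 0 < ε) (hδ : 0 < δ)
    (hlam : ∀ i, 0 < lam i) (hμ : ∀ i, μ i ≤ ε⁻¹) (hsum : n - 1 + δ ≤ ∑ i, μ i / lam i)
    (hW : 2 * n / (ε * δ) ≤ ∑ i, lam i) (hA : ε * ∑ i, 1 / lam i < 2 * n)
    (hθ : θ ≤ δ / (2 * (1 + 2 * n / ε))) :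
    θ * (1 + ∑ i, linCoeff lam i) ≤ ∑ i, linCoeff lam i * (μ i - lam i) := by
  have : Nonempty (Fin n) := ⟨⟨0, hn⟩⟩
  have hW0 : 0 < ∑ i, lam i := sum_pos (fun i _ => hlam i) univ_nonempty
  have hμW : (∑ i, μ i) / ∑ i, lam i ≤ δ / 2 := by
    have hμn : ∑ i, μ i ≤ n / ε := by
      simpa [div_eq_mul_inv] using sum_le_sum fun i (_ : i ∈ univ) => hμ i
    rw [div_le_iff₀ hW0]
    calc ∑ i, μ i ≤ n / ε := hμn
      _ = δ / 2 * (2 * n / (ε * δ)) := by field_simp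
      _ ≤ δ / 2 * ∑ i, lam i := by gcongr
  have hθF : θ * (1 + ∑ i, linCoeff lam i) ≤ δ / 2 := by
    have hF : ∑ i, linCoeff lam i ≤ 2 * n / ε := by
      have hFsum : ∑ i, linCoeff lam i = ∑ i, 1 / lam i - n / ∑ i, lam i := by
        simpa using sum_linCoeff_mul lam 1
      calc ∑ i, linCoeff lam i ≤ ∑ i, 1 / lam i := by
            rw [hFsum]; exact sub_le_self _ (by positivity)
        _ ≤ 2 * n / ε := by rw [le_div_iff₀ hε, mul_comm]; exact hA.le
    have hF0 : 0 ≤ ∑ i, linCoeff lam i := sum_nonneg fun i _ => linCoeff_nonneg hlam i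
    calc θ * (1 + ∑ i, linCoeff lam i) ≤ δ / (2 * (1 + 2 * n / ε)) * (1 + 2 * n / ε) :=
          mul_le_mul hθ (by linarith) (by linarith) (by positivity)
      _ = δ / 2 := by field_simp
  simp only [mul_sub, sum_sub_distrib, sum_linCoeff_mul_self hlam, sum_linCoeff_mul lam μ,
    Fintype.card_fin]
  linarith

theorem card_sub_one_add_log_le_sum_div {ψ Ψ : ℝ} (hn : 2 ≤ n) (hε : 0 < ε)
    (hlam : ∀ i, 0 < lam i) (hμl : ∀ i, ε ≤ μ i) (hμu : ∀ i, μ i ≤ ε⁻¹) (hψΨ : ψ ≤ Ψ)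
    (heq : n * ∏ i, lam i = ψ * ∑ i, lam i) (hsub : ψ / n * ∑ i, μ i ≤ ∏ i, μ i)
    (hA : ε * ∑ i, 1 / lam i < 2 * n)
    (hW : 2 * (1 + (n - 1) * ε ^ 2) * ((n - 1) * Ψ / (ε / (2 * n)) ^ (n - 2))
      ≤ (n - 1) * ε ^ 2 * ∑ i, lam i) :
    n - 1 + log (1 + (n - 1) * ε ^ 2 / 2) ≤ ∑ i, μ i / lam i := by
  have : Nonempty (Fin n) := ⟨⟨0, by omega⟩⟩
  set W := ∑ i, lam i
  set ρ : ℝ := (n - 1) * ε ^ 2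
  have hn1 : (1 : ℝ) ≤ n - 1 := by
    rw [le_sub_iff_add_le]; exact_mod_cast hn
  have hρ : 0 < ρ := by positivity
  have hW0 : 0 < W := sum_pos (fun i _ => hlam i) univ_nonempty
  have hμ : ∀ i, 0 < μ i := fun i => hε.trans_le (hμl i)
  have ha : ∀ i, ε / (2 * n) ≤ lam i := fun i => by
    have : 1 / lam i ≤ ∑ j, 1 / lam j :=
      single_le_sum (fun j _ => (one_div_pos.2 (hlam j)).le) (mem_univ i)
    have : ε / lam i < 2 * n := by
      calc ε / lam i = ε * (1 / lam i) := by ring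
        _ ≤ ε * ∑ j, 1 / lam j := by gcongr
        _ < 2 * n := hA
    rw [div_le_iff₀ (by positivity)]
    rw [div_lt_iff₀ (hlam i)] at this
    linarith
  obtain ⟨m, hm⟩ := Finite.exists_max lam
  have hdom : W - lam m ≤ (n - 1) * Ψ / (ε / (2 * n)) ^ (n - 2) := by
    have := sum_sub_max_le (by positivity) ha hm (by simpa using heq)
    simp only [Fintype.card_fin] at this
    exact this.trans (by gcongr)
  have hratio : 1 + ρ ≤ (∑ i, μ i) / μ m := by
    simpa using one_add_mul_sq_le_sum_div hε hμl hμu m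
  have hprod : 1 + ρ / 2 ≤ ∏ i ∈ univ.erase m, μ i / lam i := by
    calc 1 + ρ / 2 ≤ (1 + ρ) * (lam m / W) := by
          rw [mul_div_assoc', le_div_iff₀ hW0]
          linarith [mul_le_mul_of_nonneg_left hdom (by positivity : (0 : ℝ) ≤ 1 + ρ)]
      _ ≤ (∑ i, μ i) / μ m * (lam m / W) := by gcongr; exact (div_pos (hlam m) hW0).le
      _ ≤ ∏ i ∈ univ.erase m, μ i / lam i :=
          sum_div_mul_div_le_prod_erase_div hlam hμ (by simpa using heq) (by simpa using hsub) m
  have hlog := log_prod_le_sum_sub_card (s := univ.erase m) fun i _ => div_pos (hμ i) (hlam i)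
  rw [card_erase_of_mem (mem_univ m), card_univ, Fintype.card_fin, Nat.cast_pred (by omega)]
    at hlog
  calc n - 1 + log (1 + ρ / 2) ≤ n - 1 + log (∏ i ∈ univ.erase m, μ i / lam i) := by
        gcongr
    _ ≤ ∑ i ∈ univ.erase m, μ i / lam i := by linarith
    _ ≤ ∑ i, μ i / lam i :=
        sum_le_sum_of_subset_of_nonneg (subset_univ _) fun i _ _ => (div_pos (hμ i) (hlam i)).le

end

theorem strict_concavity_general (n : ℕ) (hn : 2 ≤ n) (ε Ψ : ℝ) (hε : 0 < ε) :
    ∃ θ > (0 : ℝ), ∃ N > (0 : ℝ),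
      ∀ (lam μ : Fin n → ℝ) (ψ : ℝ),
        (∀ i, 0 < lam i) → (∀ i, ε ≤ μ i) → (∀ i, μ i ≤ ε⁻¹) →
        0 < ψ → ψ ≤ Ψ →
        (n : ℝ) * ∏ i, lam i = ψ * ∑ i, lam i →
        N ≤ ∑ i, lam i →
        (ψ / n) * ∑ i, μ i ≤ ∏ i, μ i →
        θ * (1 + ∑ i, (1 / lam i - 1 / (∑ j, lam j)))
          ≤ ∑ i, (1 / lam i - 1 / (∑ j, lam j)) * (μ i - lam i) := by
  have hn1 : (1 : ℝ) ≤ n - 1 := by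
    rw [le_sub_iff_add_le]; exact_mod_cast hn
  set ρ : ℝ := (n - 1) * ε ^ 2
  have hρ : 0 < ρ := mul_pos (by linarith) (by positivity)
  set δ := log (1 + ρ / 2)
  have hδ : 0 < δ := log_pos (by linarith)
  refine ⟨min (min (ε / 2) (1 / 2)) (δ / (2 * (1 + 2 * n / ε))), ?_,
    max (max (n * ε) (2 * n / (ε * δ)))
      (2 * (1 + ρ) * ((n - 1) * Ψ / (ε / (2 * n)) ^ (n - 2)) / ρ), ?_, ?_⟩
  · positivity
  · positivity
  intro lam μ ψ hlam hμl hμu _ hψΨ heq hN hsub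
  rw [max_le_iff, max_le_iff] at hN
  obtain ⟨⟨hN₁, hN₂⟩, hN₃⟩ := hN
  rcases le_or_gt (2 * n : ℝ) (ε * ∑ i, 1 / lam i) with hA | hA
  · exact concavity_of_le_sum_inv (by omega) hlam hμl hN₁ hA
      ((min_le_left _ _).trans (min_le_left _ _)) ((min_le_left _ _).trans (min_le_right _ _))
  · exact concavity_of_le_sum_div (by omega) hε hδ hlam hμu
      (card_sub_one_add_log_le_sum_div hn hε hlam hμl hμu hψΨ heq hsub hA
        (by rw [div_le_iff₀ (by positivity)] at hN₃; linarith))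
      hN₂ hA (min_le_right _ _)

/-- Strict concavity lemma (Lemma 2.2, scalar eigenvalue form): there are
`θ, N > 0` depending only on `n, ε, Ψ` such that whenever `λᵢ > 0` with
`W = ∑ λᵢ ≥ N`, `n ∏ λᵢ = ψ W` with `0 < ψ ≤ Ψ`, `ε ≤ μᵢ ≤ ε⁻¹`, and
`∏ μᵢ ≥ (ψ/n) ∑ μᵢ`, then `∑ Fⁱⁱ (μᵢ - λᵢ) ≥ θ (1 + ∑ Fⁱⁱ)` where
`Fⁱⁱ = 1/λᵢ - 1/W`. -/
theorem strict_concavity (n : ℕ) (hn : 2 ≤ n) (ε Ψ : ℝ) (hε : 0 < ε) (hΨ : 0 < Ψ) :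
    ∃ θ > (0 : ℝ), ∃ N > (0 : ℝ),
      ∀ (lam μ : Fin n → ℝ) (ψ : ℝ),
        (∀ i, 0 < lam i) → (∀ i, ε ≤ μ i) → (∀ i, μ i ≤ ε⁻¹) →
        0 < ψ → ψ ≤ Ψ →
        (n : ℝ) * ∏ i, lam i = ψ * ∑ i, lam i →
        N ≤ ∑ i, lam i →
        (ψ / n) * ∑ i, μ i ≤ ∏ i, μ i →
        θ * (1 + ∑ i, (1 / lam i - 1 / (∑ j, lam j)))
          ≤ ∑ i, (1 / lam i - 1 / (∑ j, lam j)) * (μ i - lam i) :=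
  strict_concavity_general n hn ε Ψ hε
end
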